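/- Fix positive integers L ≥ 2 and T. The set of functions realizable as a linear layer composed with Reversible Instance Normalisation — i.e., functions of the form f(x) = μ(x)·1_T + σ(x)·(β·1_T + α·(A·R(x) + c)) where R(x) = (1/α)·((x − μ(x)·1_L)/σ(x) − β·1_L), defined for x ∈ ℝ^L with σ(x) > 0, where A ranges over T×L real matrices, c over ℝ^T, and the RevIN affine parameters range over α ∈ ℝ \ {0} and β ∈ ℝ — is exactly equal to the set of functions of the form x ↦ Ã·x + σ(x)·b, where b ∈ ℝ^T and Ã is a T×L real matrix each of whose rows sums to 1. -/

import Mathlib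

/-!
Undoing the normalisation cancels α and σ(x), so RevIN around `x ↦ A x + c` computes
`A x + μ(x)(1 - A 1) + σ(x)(β(1 - A 1) + α c)`. Since `μ(x)` is itself linear in `x`, the middle
term spreads the defect `1 - (row sum)` evenly over each row, which makes the rows sum to one;
conversely a matrix with unit row sums is realised with `α = 1`, `β = 0`.
-/

/-- The mean of the components of `x ∈ ℝ^L`. -/
noncomputable def mea (L : ℕ) (x : Fin L → ℝ) : ℝ := (∑ i, x i) / L

/-- The (population) standard deviation of the components of `x ∈ ℝ^L`. -/
noncomputable def sdev (L : ℕ) (x : Fin L → ℝ) : ℝ :=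
  Real.sqrt ((∑ i, (x i - mea L x) ^ 2) / L)

open Matrix

section
variable {L T : ℕ}

noncomputable def revinLinear (A : Matrix (Fin T) (Fin L) ℝ) (c : Fin T → ℝ) (α β : ℝ)
    (x : Fin L → ℝ) : Fin T → ℝ :=
  fun i => mea L x + sdev L x *
    (β + α * ((A *ᵥ fun j => (1 / α) * ((x j - mea L x) / sdev L x - β)) i + c i))

lemma revinLinear_eq (A : Matrix (Fin T) (Fin L) ℝ) (c : Fin T → ℝ) {α : ℝ} (β : ℝ)
    (hα : α ≠ 0) {x : Fin L → ℝ} (hσ : sdev L x ≠ 0) :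
    revinLinear A c α β x =
      A *ᵥ x + mea L x • (1 - A *ᵥ 1) + sdev L x • (β • (1 - A *ᵥ 1) + α • c) := by
  funext i
  simp only [revinLinear, mulVec, dotProduct, Pi.add_apply, Pi.smul_apply, Pi.sub_apply,
    Pi.one_apply, smul_eq_mul, mul_one]
  have hrow : ∀ j, A i j * ((1 / α) * ((x j - mea L x) / sdev L x - β)) =
      (A i j * x j - mea L x * A i j - sdev L x * β * A i j) / (α * sdev L x) := by
    intro j; field_simp
  simp only [hrow, ← Finset.sum_div, Finset.sum_sub_distrib, ← Finset.mul_sum]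
  field_simp
  ring

lemma mea_smul_eq_mulVec (v : Fin T → ℝ) (x : Fin L → ℝ) :
    mea L x • v = of (fun i (_ : Fin L) => v i / L) *ᵥ x := by
  funext i
  simp only [mea, Pi.smul_apply, smul_eq_mul, mulVec, dotProduct, of_apply, ← Finset.mul_sum]
  ring

lemma mulVec_one_of_const_div (hL : (L : ℝ) ≠ 0) (v : Fin T → ℝ) :
    of (fun i (_ : Fin L) => v i / L) *ᵥ 1 = v := by
  funext i
  simp only [mulVec, dotProduct, of_apply, Pi.one_apply, mul_one, Finset.sum_const,
    Finset.card_univ, Fintype.card_fin, nsmul_eq_mul]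
  field_simp

lemma mulVec_one_eq_one_iff (A : Matrix (Fin T) (Fin L) ℝ) :
    A *ᵥ 1 = 1 ↔ ∀ i, ∑ j, A i j = 1 := by
  simp [funext_iff, mulVec, dotProduct]

lemma revinLinear_eq_of_rowSum_eq_one {A : Matrix (Fin T) (Fin L) ℝ} (hA : A *ᵥ 1 = 1)
    (c : Fin T → ℝ) {x : Fin L → ℝ} (hσ : sdev L x ≠ 0) :
    revinLinear A c 1 0 x = A *ᵥ x + sdev L x • c := by
  simp [revinLinear_eq A c 0 one_ne_zero hσ, hA]

end

theorem rlinear_class_general (L T : ℕ) (hL : 2 ≤ L) :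
    (∀ (A : Matrix (Fin T) (Fin L) ℝ) (c : Fin T → ℝ) (α β : ℝ), α ≠ 0 →
      ∃ (At : Matrix (Fin T) (Fin L) ℝ) (b : Fin T → ℝ),
        (∀ i, ∑ j, At i j = 1) ∧
        ∀ x : Fin L → ℝ, 0 < sdev L x →
          (fun i => mea L x + sdev L x *
              (β + α * (A.mulVec
                (fun j => (1 / α) * ((x j - mea L x) / sdev L x - β)) i + c i))) =
            At.mulVec x + sdev L x • b) ∧
    (∀ (At : Matrix (Fin T) (Fin L) ℝ) (b : Fin T → ℝ), (∀ i, ∑ j, At i j = 1) →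
      ∃ (A : Matrix (Fin T) (Fin L) ℝ) (c : Fin T → ℝ) (α β : ℝ), α ≠ 0 ∧
        ∀ x : Fin L → ℝ, 0 < sdev L x →
          (fun i => mea L x + sdev L x *
              (β + α * (A.mulVec
                (fun j => (1 / α) * ((x j - mea L x) / sdev L x - β)) i + c i))) =
            At.mulVec x + sdev L x • b) := by
  have hL0 : (L : ℝ) ≠ 0 := Nat.cast_ne_zero.2 (by omega)
  refine ⟨fun A c α β hα => ?_, fun At b hrow => ?_⟩
  · set D := of fun i (_ : Fin L) => (1 - A *ᵥ 1) i / L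
    refine ⟨A + D, β • (1 - A *ᵥ 1) + α • c, (mulVec_one_eq_one_iff _).1 ?_,
      fun x hσ => ?_⟩
    · rw [add_mulVec, mulVec_one_of_const_div hL0, add_sub_cancel]
    · rw [add_mulVec, ← mea_smul_eq_mulVec]
      exact revinLinear_eq A c β hα hσ.ne'
  · exact ⟨At, b, 1, 0, one_ne_zero, fun x hσ =>
      revinLinear_eq_of_rowSum_eq_one ((mulVec_one_eq_one_iff At).2 hrow) b hσ.ne'⟩

/-- A linear layer composed with Reversible Instance Normalisation realizes
exactly the functions `x ↦ Ã·x + σ(x)·b` with the rows of `Ã` summing to 1,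
on `{x : σ(x) > 0}`. -/
theorem rlinear_class (L T : ℕ) (hL : 2 ≤ L) (hT : 0 < T) :
    (∀ (A : Matrix (Fin T) (Fin L) ℝ) (c : Fin T → ℝ) (α β : ℝ), α ≠ 0 →
      ∃ (At : Matrix (Fin T) (Fin L) ℝ) (b : Fin T → ℝ),
        (∀ i, ∑ j, At i j = 1) ∧
        ∀ x : Fin L → ℝ, 0 < sdev L x →
          (fun i => mea L x + sdev L x *
              (β + α * (A.mulVec
                (fun j => (1 / α) * ((x j - mea L x) / sdev L x - β)) i + c i))) =
            At.mulVec x + sdev L x • b) ∧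
    (∀ (At : Matrix (Fin T) (Fin L) ℝ) (b : Fin T → ℝ), (∀ i, ∑ j, At i j = 1) →
      ∃ (A : Matrix (Fin T) (Fin L) ℝ) (c : Fin T → ℝ) (α β : ℝ), α ≠ 0 ∧
        ∀ x : Fin L → ℝ, 0 < sdev L x →
          (fun i => mea L x + sdev L x *
              (β + α * (A.mulVec
                (fun j => (1 / α) * ((x j - mea L x) / sdev L x - β)) i + c i))) =
            At.mulVec x + sdev L x • b) :=
  rlinear_class_general L T hL
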